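/- C₄(2) > ack 4 253 + 7 (the paper's computation C̃₄(2) > F₄(253) + 7). -/
import Mathlib


def C0 (m : ℕ) : ℕ := 2 ^ m
def C1 (m : ℕ) : ℕ := 2 ^ m

def C2 : ℕ → ℕ
  | 0 => 0
  | m + 1 => C2 m + 2 ^ (C2 m)

def C3 (m : ℕ) : ℕ := 2 ^ m

def C4 : ℕ → ℕ
  | 0 => 0
  | 1 => 8
  | m + 2 => C4 (m + 1) + C1 (C2 (C3 (C4 (m + 1)))) - 1

def C5 : ℕ → ℕ
  | 0 => 0
  | 1 => 2
  | m + 2 => C5 (m + 1) + C3 (C4 (C5 (m + 1)))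

def C6 (m : ℕ) : ℕ := 2 ^ m

def C7 : ℕ → ℕ
  | 0 => 0
  | m + 1 => C7 m + C1 (C2 (C3 (C4 (C5 (C6 (C7 m)))))) - 8

def C8 (m : ℕ) : ℕ := 2 ^ m

def H (n : ℕ) : ℕ := C1 (C2 (C3 (C4 (C5 n))))
def G (n : ℕ) : ℕ := C1 (C2 (C3 (C4 (C5 (C6 (C7 (C8 n)))))))

def C9 : ℕ → ℕ
  | 0 => 0
  | 1 => G (H 1 - 8) - 8
  | m + 2 => C9 (m + 1) + G (C9 (m + 1)) - H 1

def C10 : ℕ → ℕ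
  | 0 => 0
  | m + 1 => C10 m + C3 (C4 (C5 (C6 (C7 (C8 (C9 (C10 m)))))))

lemma C2_step (m : ℕ) : C2 (m + 1) = C2 m + 2 ^ C2 m := rfl

lemma C4_step (m : ℕ) : C4 (m + 2) = C4 (m + 1) + C1 (C2 (C3 (C4 (m + 1)))) - 1 := rfl

lemma C1_def (n : ℕ) : C1 n = 2 ^ n := rfl

lemma ack4_succ (m : ℕ) : ack 4 (m + 1) + 3 = 2 ^ (ack 4 m + 3) := by
  have h : ack 4 (m + 1) = ack 3 (ack 4 m) := by rw [ack_succ_succ]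
  have h3 : 3 ≤ 2 ^ (ack 4 m + 3) := by
    calc 3 ≤ 2 ^ 3 := by norm_num
    _ ≤ 2 ^ (ack 4 m + 3) := Nat.pow_le_pow_right (by norm_num) (by omega)
  rw [h, ack_three]
  omega

lemma ack4_le_C2 (m : ℕ) : ack 4 m + 3 ≤ C2 (m + 4) := by
  induction m with
  | zero =>
    have h0 : ack 4 0 = 13 := by
      rw [show (4:ℕ) = 3 + 1 from rfl, ack_succ_zero, ack_three]; norm_num
    have h1 : C2 (0 + 4) = 2059 := by
      rw [show (0:ℕ) + 4 = 3 + 1 from rfl, C2_step, show (3:ℕ) = 2 + 1 from rfl,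
          C2_step, show (2:ℕ) = 1 + 1 from rfl, C2_step, show (1:ℕ) = 0 + 1 from rfl,
          C2_step, show C2 0 = 0 from rfl]
      norm_num
    omega
  | succ n ih =>
    have h := ack4_succ n
    have hp : 2 ^ (ack 4 n + 3) ≤ 2 ^ C2 (n + 4) :=
      Nat.pow_le_pow_right (by norm_num) ih
    have hs : C2 (n + 5) = C2 (n + 4) + 2 ^ C2 (n + 4) := C2_step (n + 4)
    rw [show n + 1 + 4 = n + 5 from by omega]
    omega

lemma arith_aux (X Y a c : ℕ) (h1 : c = 8 + X - 1) (h2 : a + 3 = Y) (h3 : Y ≤ X)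
    (h4 : 1 ≤ X) : c > a + 7 := by omega

lemma two_pow_mono (a b : ℕ) (h : a ≤ b) : 2 ^ a ≤ 2 ^ b :=
  Nat.pow_le_pow_right (by norm_num) h

lemma one_le_two_pow' (a : ℕ) : 1 ≤ 2 ^ a := Nat.one_le_two_pow

theorem stmt_9 : C4 2 > ack 4 253 + 7 := by
  have hC : C4 2 = 8 + 2 ^ C2 (C3 8) - 1 := by
    have h := C4_step 0
    rw [show (0:ℕ) + 2 = 2 from rfl, show (0:ℕ) + 1 = 1 from rfl,
        show C4 1 = 8 from rfl, C1_def] at h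
    exact h
  have hA : ack 4 253 + 3 = 2 ^ (ack 4 252 + 3) := by
    rw [show (253:ℕ) = 252 + 1 from rfl]
    exact ack4_succ 252
  have hL : ack 4 252 + 3 ≤ C2 (C3 8) := by
    rw [show C3 8 = 256 from rfl]
    exact ack4_le_C2 252
  have hp : 2 ^ (ack 4 252 + 3) ≤ 2 ^ C2 (C3 8) := two_pow_mono _ _ hL
  have h4 : 1 ≤ 2 ^ C2 (C3 8) := one_le_two_pow' _
  exact arith_aux _ _ _ _ hC hA hp h4
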